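/- Let k, E⋆, S⋆, β, γ be real constants and let A, I : ℝ → ℝ be arbitrary functions. Suppose E, S : ℝ → ℝ are differentiable and for every t satisfy E'(t) = −k·(E(t) − E⋆) + β·A(t)·I(t)·E(t)·S(t) − γ·E(t)·S(t) and S'(t) = −k·(S(t) − S⋆) − β·A(t)·I(t)·E(t)·S(t) + γ·E(t)·S(t). If the initial total population satisfies E(0) + S(0) = E⋆ + S⋆, then the total T cell population is conserved: E(t) + S(t) = E⋆ + S⋆ for all t. -/

import Mathlib

/-! The interaction terms cancel in E' + S', so the excess E + S - (E⋆ + S⋆) solves the linear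
equation u' = -k u. Hence it equals its initial value times exp(-k t), and that initial value
is zero. -/

theorem eq_mul_exp_of_hasDerivAt_mul_self {u : ℝ → ℝ} {c : ℝ}
    (hu : ∀ t, HasDerivAt u (c * u t) t) (t : ℝ) : u t = u 0 * Real.exp (c * t) := by
  set f : ℝ → ℝ := fun t => u t * Real.exp (-(c * t))
  have hf : ∀ t, HasDerivAt f 0 t := fun t => by
    have hexp : HasDerivAt (fun t => Real.exp (-(c * t))) (Real.exp (-(c * t)) * -c) t :=
      (((hasDerivAt_id t).const_mul c).neg).exp.congr_deriv (by simp)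
    exact ((hu t).mul hexp).congr_deriv (by ring)
  have hconst : f t = f 0 :=
    is_const_of_deriv_eq_zero (fun x => (hf x).differentiableAt) (fun x => (hf x).deriv) t 0
  calc u t = f t * Real.exp (c * t) := by
        simp only [f, mul_assoc, ← Real.exp_add, neg_add_cancel, Real.exp_zero, mul_one]
    _ = u 0 * Real.exp (c * t) := by simp [hconst, f]

/-- If the initial total T cell population equals E⋆ + S⋆, then
the total population is conserved for all time. -/
theorem total_Tcell_conserved
    (k Estar Sstar β γ : ℝ) (A I : ℝ → ℝ) (E S : ℝ → ℝ)
    (hE : ∀ t : ℝ, HasDerivAt E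
      (-k * (E t - Estar) + β * A t * I t * E t * S t - γ * E t * S t) t)
    (hS : ∀ t : ℝ, HasDerivAt S
      (-k * (S t - Sstar) - β * A t * I t * E t * S t + γ * E t * S t) t)
    (h0 : E 0 + S 0 = Estar + Sstar) :
    ∀ t : ℝ, E t + S t = Estar + Sstar := by
  have hexcess : ∀ t, HasDerivAt (fun t => E t + S t - (Estar + Sstar))
      (-k * (E t + S t - (Estar + Sstar))) t := fun t =>
    (((hE t).add (hS t)).sub_const _).congr_deriv (by ring)
  intro t
  have h := eq_mul_exp_of_hasDerivAt_mul_self hexcess t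
  rw [h0, sub_self, zero_mul] at h
  linarith
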